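/- Let H→ be an acyclic orientation of a simple graph H with source set S. If the unique reachability graph UR_S contains a triangle (three pairwise adjacent vertices), then dtw(H→) ≥ 2; that is, every DAG tree decomposition of H→ has width at least 2. -/

import Mathlib

/-- An acyclic orientation of a simple graph `H`: a relation `D` directing every
edge of `H` (and nothing else) with no directed cycle. -/
structure GraphOrientation {V : Type} (H : SimpleGraph V) : Type where
  D : V → V → Prop
  adj_of_rel : ∀ u v, D u v → H.Adj u v
  rel_of_adj : ∀ u v, H.Adj u v → D u v ∨ D v u
  acyclic : ∀ v, ¬ Relation.TransGen D v v

namespace GraphOrientation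

variable {V : Type} {H : SimpleGraph V}

/-- The set of sources of an acyclic orientation: vertices with no incoming edge. -/
def sources (O : GraphOrientation H) : Set V := {s | ∀ u, ¬ O.D u s}

/-- The set of vertices reachable from `s` by a directed path (including `s`). -/
def reach (O : GraphOrientation H) (s : V) : Set V := {v | Relation.ReflTransGen O.D s v}

/-- The set of vertices reachable from some vertex of `B`. -/
def reachSet (O : GraphOrientation H) (B : Set V) : Set V := ⋃ s ∈ B, O.reach s

end GraphOrientation

/-- `tree` together with the bag assignment `bag` is a (partial) DAG tree
decomposition of the orientation `O` with respect to the vertex set `Sp`: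
a finite tree whose bags are subsets of `Sp` whose union is `Sp`, such that
whenever a node `j` lies on the (unique) path between nodes `i` and `k`,
`reach(bag i) ∩ reach(bag k) ⊆ reach(bag j)`.
Taking `Sp = O.sources` gives the notion of a DAG tree decomposition of `O`. -/
def IsPDTD {V : Type} {H : SimpleGraph V} (O : GraphOrientation H) (Sp : Set V)
    {ι : Type} (tree : SimpleGraph ι) (bag : ι → Set V) : Prop :=
  Finite ι ∧ tree.IsTree ∧ (∀ i, bag i ⊆ Sp) ∧ (⋃ i, bag i) = Sp ∧
    ∀ (i j k : ι) (p : tree.Walk i k), p.IsPath → j ∈ p.support →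
      O.reachSet (bag i) ∩ O.reachSet (bag k) ⊆ O.reachSet (bag j)

/-- The width of a bag assignment: the maximum bag size. -/
noncomputable def bagWidth {V ι : Type} (bag : ι → Set V) : ℕ := ⨆ i, (bag i).ncard

/-- A width-one (partial) DAG tree decomposition: every bag is a singleton, and
distinct nodes carry distinct bags (so nodes may be identified with sources). -/
def IsWidthOnePDTD {V : Type} {H : SimpleGraph V} (O : GraphOrientation H) (Sp : Set V)
    {ι : Type} (tree : SimpleGraph ι) (bag : ι → Set V) : Prop :=
  IsPDTD O Sp tree bag ∧ Function.Injective bag ∧ ∀ i, ∃ s : V, bag i = {s}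

/-- `H` contains an induced cycle of length `n`. -/
def HasInducedCycleOfLength {V : Type} (H : SimpleGraph V) (n : ℕ) : Prop :=
  Nonempty (SimpleGraph.cycleGraph n ↪g H)

/-- The unique reachability graph of an orientation `O` over a set `Sp` of sources:
`s₁` and `s₂` are adjacent iff some vertex is reachable from both `s₁` and `s₂`
but from no other member of `Sp`. -/
def URGraph {V : Type} {H : SimpleGraph V} (O : GraphOrientation H) (Sp : Set V) :
    SimpleGraph V where
  Adj s₁ s₂ := s₁ ∈ Sp ∧ s₂ ∈ Sp ∧ s₁ ≠ s₂ ∧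
    ((O.reach s₁ ∩ O.reach s₂) \ O.reachSet (Sp \ {s₁, s₂})).Nonempty
  symm := by
    constructor
    rintro a b ⟨ha, hb, hab, hx⟩
    refine ⟨hb, ha, hab.symm, ?_⟩
    rwa [Set.inter_comm (O.reach b) (O.reach a), Set.pair_comm b a]
  loopless := by
    constructor
    rintro a ⟨-, -, h, -⟩
    exact h rfl

/-- `(x, (tree, bag))` is a good pair: some leaf `ℓ` of the width-one decomposition,
with unique neighbour `d`, satisfies `reach x ∩ reach ℓ ⊆ reach d`. -/
def GoodPair {V : Type} {H : SimpleGraph V} (O : GraphOrientation H)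
    {ι : Type} (tree : SimpleGraph ι) (bag : ι → Set V) (x : V) : Prop :=
  ∃ (i j : ι) (l d : V), tree.neighborSet i = {j} ∧ bag i = {l} ∧ bag j = {d} ∧
    O.reach x ∩ O.reach l ⊆ O.reach d

/-
If every bag had at most one element, every bag would be empty or a singleton `{s}` with `s` a
source. For adjacent `a`, `b` in the unique reachability graph, a vertex reachable from `a` and
`b` only must be reachable from every bag on the tree path between a bag `{a}` and a bag `{b}`,
so all bags on that path are `{a}` or `{b}`. For a triangle `s₁ s₂ s₃`, extract a path from
`{s₁}` to `{s₃}` out of the concatenated paths `{s₁} → {s₂} → {s₃}`. It has an edge joining a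
`{s₁}`-bag to a `{s₃}`-bag, and that edge lies on the path from `{s₁}` to `{s₂}`, which carries
no `{s₃}`-bag, or on the one from `{s₂}` to `{s₃}`, which carries no `{s₁}`-bag.
-/

open SimpleGraph

namespace GraphOrientation

variable {V : Type} {H : SimpleGraph V} (O : GraphOrientation H)

theorem reachSet_singleton (s : V) : O.reachSet {s} = O.reach s := by
  simp [reachSet]

end GraphOrientation

theorem ncard_le_bagWidth {V ι : Type} [Finite ι] (bag : ι → Set V) (i : ι) :
    (bag i).ncard ≤ bagWidth bag :=
  le_ciSup (f := fun i ↦ (bag i).ncard) (Set.finite_range _).bddAbove i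

-- `Finite V` matters: an infinite bag has `ncard` zero.
theorem subsingleton_of_bagWidth_lt_two {V ι : Type} [Finite V] [Finite ι] {bag : ι → Set V}
    (h : bagWidth bag < 2) (i : ι) : (bag i).Subsingleton :=
  Set.ncard_le_one_iff_subsingleton.mp (by have := ncard_le_bagWidth bag i; omega)

namespace IsPDTD

variable {V : Type} {H : SimpleGraph V} {O : GraphOrientation H} {Sp : Set V}
  {ι : Type} {tree : SimpleGraph ι} {bag : ι → Set V}

theorem exists_bag_eq_singleton (hD : IsPDTD O Sp tree bag) (hw : ∀ i, (bag i).Subsingleton)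
    {s : V} (hs : s ∈ Sp) : ∃ i, bag i = {s} := by
  obtain ⟨-, -, -, hunion, -⟩ := hD
  rw [← hunion, Set.mem_iUnion] at hs
  obtain ⟨i, hi⟩ := hs
  exact ⟨i, (hw i).eq_singleton_of_mem hi⟩

theorem exists_mem_pair_of_mem_path (hD : IsPDTD O Sp tree bag) {a b : V}
    (hab : (URGraph O Sp).Adj a b) {ia ib j : ι} (ha : bag ia = {a}) (hb : bag ib = {b})
    {p : tree.Walk ia ib} (hp : p.IsPath) (hj : j ∈ p.support) :
    ∃ t ∈ bag j, t = a ∨ t = b := by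
  obtain ⟨-, -, hsub, -, hpath⟩ := hD
  obtain ⟨-, -, -, x, ⟨hxa, hxb⟩, hx⟩ := hab
  have hxj : x ∈ O.reachSet (bag j) :=
    hpath ia j ib p hp hj
      ⟨by rwa [ha, O.reachSet_singleton], by rwa [hb, O.reachSet_singleton]⟩
  obtain ⟨t, ht, hxt⟩ := Set.mem_iUnion₂.mp hxj
  by_contra! hne
  exact hx (Set.mem_iUnion₂.mpr ⟨t, ⟨hsub j ht, by simpa using hne t ht⟩, hxt⟩)

theorem bag_eq_or_of_mem_path (hD : IsPDTD O Sp tree bag) (hw : ∀ i, (bag i).Subsingleton)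
    {a b : V} (hab : (URGraph O Sp).Adj a b) {ia ib j : ι} (ha : bag ia = {a})
    (hb : bag ib = {b}) {p : tree.Walk ia ib} (hp : p.IsPath) (hj : j ∈ p.support) :
    bag j = {a} ∨ bag j = {b} := by
  obtain ⟨t, ht, rfl | rfl⟩ := hD.exists_mem_pair_of_mem_path hab ha hb hp hj
  · exact .inl ((hw j).eq_singleton_of_mem ht)
  · exact .inr ((hw j).eq_singleton_of_mem ht)

theorem false_of_urGraph_triangle (hD : IsPDTD O Sp tree bag) (hw : ∀ i, (bag i).Subsingleton)
    {s₁ s₂ s₃ : V} (h12 : (URGraph O Sp).Adj s₁ s₂) (h23 : (URGraph O Sp).Adj s₂ s₃)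
    (h13 : (URGraph O Sp).Adj s₁ s₃) : False := by
  classical
  obtain ⟨i₁, hi₁⟩ := hD.exists_bag_eq_singleton hw h12.1
  obtain ⟨i₂, hi₂⟩ := hD.exists_bag_eq_singleton hw h12.2.1
  obtain ⟨i₃, hi₃⟩ := hD.exists_bag_eq_singleton hw h23.2.1
  have htree : tree.Connected := hD.2.1.connected
  obtain ⟨p₁₂, hp₁₂⟩ := htree.exists_isPath i₁ i₂
  obtain ⟨p₂₃, hp₂₃⟩ := htree.exists_isPath i₂ i₃
  set p₁₃ := (p₁₂.append p₂₃).bypass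
  have singleton_ne {a b : V} (h : (URGraph O Sp).Adj a b) : ({a} : Set V) ≠ {b} := by
    simpa using h.ne
  obtain ⟨d, hd, hd₁, hnot₁⟩ := p₁₃.exists_boundary_dart {j | bag j = {s₁}} hi₁
    (by simpa [hi₃] using (singleton_ne h13).symm)
  have hd₃ : bag d.snd = {s₃} :=
    (hD.bag_eq_or_of_mem_path hw h13 hi₁ hi₃ (p₁₂.append p₂₃).bypass_isPath
      (p₁₃.dart_snd_mem_support_of_mem_darts hd)).resolve_left hnot₁
  have hd₁₂₃ := (p₁₂.append p₂₃).darts_bypass_subset_darts hd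
  rw [Walk.darts_append, List.mem_append] at hd₁₂₃
  rcases hd₁₂₃ with hd₁₂ | hd₂₃
  · rcases hD.bag_eq_or_of_mem_path hw h12 hi₁ hi₂ hp₁₂
      (p₁₂.dart_snd_mem_support_of_mem_darts hd₁₂) with h | h
    · exact singleton_ne h13 (hd₃ ▸ h).symm
    · exact singleton_ne h23 (hd₃ ▸ h).symm
  · rcases hD.bag_eq_or_of_mem_path hw h23 hi₂ hi₃ hp₂₃
      (p₂₃.dart_fst_mem_support_of_mem_darts hd₂₃) with h | h
    · exact singleton_ne h12 (hd₁.symm.trans h)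
    · exact singleton_ne h13 (hd₁.symm.trans h)

end IsPDTD

/-- If the unique reachability graph over the full source set of an
acyclic orientation of `H` contains a triangle, then every DAG tree decomposition
of this orientation has width at least 2 (i.e. `dtw(H→) ≥ 2`). -/
theorem dtw_ge_two_of_urGraph_triangle {V : Type} [Fintype V] (H : SimpleGraph V)
    (O : GraphOrientation H) (s₁ s₂ s₃ : V)
    (h12 : (URGraph O O.sources).Adj s₁ s₂)
    (h23 : (URGraph O O.sources).Adj s₂ s₃)
    (h13 : (URGraph O O.sources).Adj s₁ s₃) :
    ∀ (ι : Type) (tree : SimpleGraph ι) (bag : ι → Set V),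
      IsPDTD O O.sources tree bag → 2 ≤ bagWidth bag := by
  intro ι tree bag hD
  have : Finite ι := hD.1
  by_contra! hlt
  exact hD.false_of_urGraph_triangle (subsingleton_of_bagWidth_lt_two hlt) h12 h23 h13
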